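/- There exists a family {h_α : α ∈ A} of functions from [0,1] to ℝ, indexed by a set A of cardinality continuum, such that for every n ≥ 1, every nonzero real polynomial P in n variables with zero constant term, and every choice of distinct indices α₁,…,α_n ∈ A, the function g = P(h_{α₁},…,h_{α_n}) is a nonzero, left-continuous function of bounded variation on [0,1] whose set of jump discontinuities is dense in (0,1). Hence the set of left-continuous functions of bounded variation on [0,1] with a dense set of jump discontinuities is strongly 𝔠-algebrable. -/

import Mathlib

open Set Filter Topology

/-- `h` has a jump discontinuity at `x`: both one-sided limits exist and are distinct. -/
def HasJumpAt (h : ℝ → ℝ) (x : ℝ) : Prop :=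
  ∃ L R : ℝ, Filter.Tendsto h (𝓝[<] x) (𝓝 L) ∧
    Filter.Tendsto h (𝓝[>] x) (𝓝 R) ∧ L ≠ R

noncomputable section JumpConstruction

open Classical in
/-- weight of the rational `q` -/
def jw (q : ℚ) : ℝ := (1 / 2 : ℝ) ^ (Encodable.encode q) * (1 / 2)

lemma jw_pos (q : ℚ) : 0 < jw q := by
  unfold jw; positivity

lemma jw_summable : Summable jw :=
  ((summable_geometric_of_lt_one (by norm_num) (by norm_num)).comp_injective
    Encodable.encode_injective).mul_right _

/-- the basic left-continuous jump function with jumps at all rationals -/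
def ju (x : ℝ) : ℝ := ∑' q : ℚ, if (q : ℝ) < x then jw q else 0

lemma ju_cond_nonneg (c : ℚ → Prop) [DecidablePred c] (q : ℚ) :
    0 ≤ if c q then jw q else 0 := by
  split_ifs
  · exact (jw_pos q).le
  · exact le_rfl

lemma ju_cond_summable (c : ℚ → Prop) [DecidablePred c] :
    Summable (fun q : ℚ => if c q then jw q else 0) := by
  apply Summable.of_nonneg_of_le (ju_cond_nonneg c) _ jw_summable
  intro q; split_ifs
  · exact le_refl _
  · exact (jw_pos q).le

lemma ju_mono : Monotone ju := by
  intro x y hxy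
  apply Summable.tsum_le_tsum _ (ju_cond_summable _) (ju_cond_summable _)
  intro q
  split_ifs with h1 h2
  · exact le_refl _
  · exact absurd (lt_of_lt_of_le h1 hxy) h2
  · exact (jw_pos q).le
  · exact le_refl _

lemma ju_diff {x y : ℝ} (hxy : x ≤ y) :
    ju y - ju x = ∑' q : ℚ, if x ≤ (q : ℝ) ∧ (q : ℝ) < y then jw q else 0 := by
  rw [ju, ju, ← Summable.tsum_sub (ju_cond_summable _) (ju_cond_summable _)]
  congr 1; funext q
  by_cases h1 : (q : ℝ) < x
  · have h2 : (q : ℝ) < y := lt_of_lt_of_le h1 hxy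
    simp [h1, h2, not_le.2 h1]
  · by_cases h2 : (q : ℝ) < y
    · simp [h1, h2, not_lt.1 h1]
    · simp [h1, h2]

lemma ju_tail {ε : ℝ} (hε : 0 < ε) : ∃ F : Finset ℚ, ∑' q : {x : ℚ // x ∉ F}, jw ↑q < ε :=
  ((tendsto_order.1 (tendsto_tsum_compl_atTop_zero jw)).2 ε hε).exists

lemma ju_sum_le (F : Finset ℚ) (c : ℚ → Prop) [DecidablePred c]
    (h : ∀ q, c q → q ∉ F) :
    (∑' q : ℚ, if c q then jw q else 0) ≤ ∑' q : {x : ℚ // x ∉ F}, jw ↑q := by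
  have heq : ∑' q : {x : ℚ // x ∉ F}, jw ↑q
      = ∑' q : ℚ, Set.indicator {x : ℚ | x ∉ F} jw q := tsum_subtype _ _
  rw [heq]
  apply Summable.tsum_le_tsum _ (ju_cond_summable _) (jw_summable.indicator _)
  intro q
  by_cases hc : c q
  · rw [if_pos hc, Set.indicator_of_mem (show q ∈ ({x : ℚ | x ∉ F}) from h q hc)]
  · rw [if_neg hc]
    exact Set.indicator_nonneg (fun q' _ => (jw_pos q').le) q

lemma exists_delta_left (F : Finset ℚ) (x : ℝ) :
    ∃ δ > 0, ∀ q ∈ F, (q : ℝ) < x → (q : ℝ) ≤ x - δ := by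
  classical
  set F' := F.filter (fun q : ℚ => (q : ℝ) < x) with hF'def
  by_cases hne : F'.Nonempty
  · have hne' : (F'.image (fun q : ℚ => (q : ℝ))).Nonempty := hne.image _
    set M := (F'.image (fun q : ℚ => (q : ℝ))).max' hne' with hMdef
    have hMlt : M < x := by
      obtain ⟨q, hq, hqM⟩ := Finset.mem_image.1 (Finset.max'_mem _ hne')
      rw [hMdef, ← hqM]
      exact (Finset.mem_filter.1 hq).2
    refine ⟨x - M, by linarith, fun q hq hlt => ?_⟩
    have hle : (q : ℝ) ≤ M :=
      Finset.le_max' _ _ (Finset.mem_image.2 ⟨q, Finset.mem_filter.2 ⟨hq, hlt⟩, rfl⟩)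
    linarith
  · exact ⟨1, one_pos, fun q hq hlt =>
      absurd ⟨q, Finset.mem_filter.2 ⟨hq, hlt⟩⟩ hne⟩

lemma exists_delta_right (F : Finset ℚ) (x : ℝ) :
    ∃ δ > 0, ∀ q ∈ F, x < (q : ℝ) → x + δ ≤ (q : ℝ) := by
  classical
  set F' := F.filter (fun q : ℚ => x < (q : ℝ)) with hF'def
  by_cases hne : F'.Nonempty
  · have hne' : (F'.image (fun q : ℚ => (q : ℝ))).Nonempty := hne.image _
    set M := (F'.image (fun q : ℚ => (q : ℝ))).min' hne' with hMdef
    have hMlt : x < M := by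
      obtain ⟨q, hq, hqM⟩ := Finset.mem_image.1 (Finset.min'_mem _ hne')
      rw [hMdef, ← hqM]
      exact (Finset.mem_filter.1 hq).2
    refine ⟨M - x, by linarith, fun q hq hlt => ?_⟩
    have hle : M ≤ (q : ℝ) :=
      Finset.min'_le _ _ (Finset.mem_image.2 ⟨q, Finset.mem_filter.2 ⟨hq, hlt⟩, rfl⟩)
    linarith
  · exact ⟨1, one_pos, fun q hq hlt =>
      absurd ⟨q, Finset.mem_filter.2 ⟨hq, hlt⟩⟩ hne⟩

lemma ju_left (x : ℝ) : Tendsto ju (𝓝[<] x) (𝓝 (ju x)) := by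
  rw [Metric.tendsto_nhdsWithin_nhds]
  intro ε hε
  obtain ⟨F, hF⟩ := ju_tail hε
  obtain ⟨δ, hδ, hδprop⟩ := exists_delta_left F x
  refine ⟨δ, hδ, fun y hy hyd => ?_⟩
  have hyx : y < x := hy
  have hgap : x - y < δ := by
    rw [Real.dist_eq, abs_of_neg (by linarith : y - x < 0)] at hyd
    linarith
  have hd : ju x - ju y = ∑' q : ℚ, if y ≤ (q : ℝ) ∧ (q : ℝ) < x then jw q else 0 :=
    ju_diff hyx.le
  have hnonneg : 0 ≤ ju x - ju y := by
    rw [hd]; exact tsum_nonneg (ju_cond_nonneg _)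
  have hbound : ju x - ju y ≤ ∑' q : {x : ℚ // x ∉ F}, jw ↑q := by
    rw [hd]
    apply ju_sum_le F _ (fun q hq hqF => ?_)
    have h1 := hδprop q hqF hq.2
    linarith [hq.1]
  have : dist (ju y) (ju x) = ju x - ju y := by
    rw [Real.dist_eq, abs_sub_comm, abs_of_nonneg hnonneg]
  rw [this]
  exact lt_of_le_of_lt hbound hF

lemma ju_lt {x y : ℝ} (h : x < y) : ju x < ju y := by
  obtain ⟨q, hq1, hq2⟩ := exists_rat_btwn h
  have hd := ju_diff h.le
  have hle : jw q ≤ ∑' q' : ℚ, if x ≤ (q' : ℝ) ∧ (q' : ℝ) < y then jw q' else 0 := by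
    have := Summable.le_tsum (ju_cond_summable (fun q' : ℚ => x ≤ (q' : ℝ) ∧ (q' : ℝ) < y)) q
      (fun j _ => by split_ifs; exacts [(jw_pos j).le, le_rfl])
    rwa [if_pos ⟨hq1.le, hq2⟩] at this
  have := jw_pos q
  linarith

lemma ju_right (r : ℚ) : Tendsto ju (𝓝[>] (r : ℝ)) (𝓝 (ju r + jw r)) := by
  rw [Metric.tendsto_nhdsWithin_nhds]
  intro ε hε
  obtain ⟨F, hF⟩ := ju_tail hε
  obtain ⟨δ, hδ, hδprop⟩ := exists_delta_right F (r : ℝ)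
  refine ⟨δ, hδ, fun y hy hyd => ?_⟩
  have hyx : (r : ℝ) < y := hy
  have hgap : y < (r : ℝ) + δ := by
    rw [Real.dist_eq, abs_of_pos (by linarith : (0:ℝ) < y - r)] at hyd
    linarith
  have hd : ju y - ju r = ∑' q : ℚ, if (r : ℝ) ≤ (q : ℝ) ∧ (q : ℝ) < y then jw q else 0 :=
    ju_diff hyx.le
  have hsplit : (∑' q : ℚ, if (r : ℝ) ≤ (q : ℝ) ∧ (q : ℝ) < y then jw q else 0)
      = jw r + ∑' q : ℚ, if (r : ℝ) < (q : ℝ) ∧ (q : ℝ) < y then jw q else 0 := by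
    rw [Summable.tsum_eq_add_tsum_ite (ju_cond_summable _) r]
    congr 1
    · rw [if_pos ⟨le_refl _, hyx⟩]
    · congr 1; funext q
      by_cases hq : q = r
      · subst hq
        simp
      · rw [if_neg hq]
        have hcast : (r : ℝ) ≠ (q : ℝ) := by
          exact_mod_cast fun hc => hq (by exact_mod_cast hc.symm)
        apply if_congr _ rfl rfl
        constructor
        · rintro ⟨h1, h2⟩; exact ⟨lt_of_le_of_ne h1 hcast, h2⟩
        · rintro ⟨h1, h2⟩; exact ⟨h1.le, h2⟩
  have hDnonneg : 0 ≤ ∑' q : ℚ, if (r : ℝ) < (q : ℝ) ∧ (q : ℝ) < y then jw q else 0 :=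
    tsum_nonneg (ju_cond_nonneg _)
  have hbound : (∑' q : ℚ, if (r : ℝ) < (q : ℝ) ∧ (q : ℝ) < y then jw q else 0)
      ≤ ∑' q : {x : ℚ // x ∉ F}, jw ↑q := by
    apply ju_sum_le F _ (fun q hq hqF => ?_)
    have h1 := hδprop q hqF hq.1
    linarith [hq.2]
  have heqd : ju y - (ju r + jw r)
      = ∑' q : ℚ, if (r : ℝ) < (q : ℝ) ∧ (q : ℝ) < y then jw q else 0 := by
    have := hd
    rw [hsplit] at this
    linarith
  have : dist (ju y) (ju r + jw r) = ju y - (ju r + jw r) := by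
    rw [Real.dist_eq, abs_of_nonneg (by rw [heqd]; exact hDnonneg)]
  rw [this, heqd]
  exact lt_of_le_of_lt hbound hF

lemma ju_right_le (r : ℚ) {y : ℝ} (h : (r : ℝ) < y) : ju r + jw r ≤ ju y := by
  have hd := ju_diff h.le
  have hle : jw r ≤ ∑' q : ℚ, if (r : ℝ) ≤ (q : ℝ) ∧ (q : ℝ) < y then jw q else 0 := by
    have := Summable.le_tsum (ju_cond_summable (fun q : ℚ => (r : ℝ) ≤ (q : ℝ) ∧ (q : ℝ) < y)) r
      (fun j _ => by split_ifs; exacts [(jw_pos j).le, le_rfl])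
    rwa [if_pos ⟨le_refl _, h⟩] at this
  linarith

lemma ju_bv : BoundedVariationOn ju (Icc 0 1) := by
  have h1 : MonotoneOn ju (Icc (0:ℝ) 1) := ju_mono.monotoneOn _
  have h2 := h1.eVariationOn_le (left_mem_Icc.2 zero_le_one) (right_mem_Icc.2 zero_le_one)
  rw [Set.inter_self] at h2
  exact ne_top_of_le_ne_top ENNReal.ofReal_ne_top h2

/-- a transitive tournament on a finite set has a maximum -/
lemma exists_rel_max {γ : Type*} (R : γ → γ → Prop)
    (htrans : ∀ a b c, R a b → R b c → R a c)
    (htot : ∀ a b, a ≠ b → R a b ∨ R b a)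
    (S : Finset γ) (hS : S.Nonempty) : ∃ m ∈ S, ∀ d ∈ S, d ≠ m → R d m := by
  classical
  induction S using Finset.induction_on with
  | empty => exact absurd hS (by simp)
  | @insert a S haS ih =>
    by_cases hSne : S.Nonempty
    · obtain ⟨m, hmS, hmax⟩ := ih hSne
      by_cases ham : a = m
      · subst ham
        exact ⟨a, Finset.mem_insert_self _ _, fun d hd hda => by
          rcases Finset.mem_insert.1 hd with rfl | hdS
          · exact absurd rfl hda
          · exact hmax d hdS hda⟩
      · rcases htot a m ham with hR | hR
        · refine ⟨m, Finset.mem_insert_of_mem hmS, fun d hd hdm => ?_⟩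
          rcases Finset.mem_insert.1 hd with rfl | hdS
          · exact hR
          · exact hmax d hdS hdm
        · refine ⟨a, Finset.mem_insert_self _ _, fun d hd hda => ?_⟩
          rcases Finset.mem_insert.1 hd with rfl | hdS
          · exact absurd rfl hda
          · by_cases hdm : d = m
            · subst hdm; exact hR
            · exact htrans d m a (hmax d hdS hdm) hR
    · rw [Finset.not_nonempty_iff_eq_empty] at hSne
      subst hSne
      exact ⟨a, Finset.mem_insert_self _ _, fun d hd hda => by
        rcases Finset.mem_insert.1 hd with rfl | hdS
        · exact absurd rfl hda
        · exact absurd hdS (by simp)⟩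

section Poly

open MvPolynomial

lemma eval_analytic {n : ℕ} (P : MvPolynomial (Fin n) ℝ) (g : Fin n → ℝ → ℝ)
    (hg : ∀ i, AnalyticOnNhd ℝ (g i) univ) :
    AnalyticOnNhd ℝ (fun t => MvPolynomial.eval (fun i => g i t) P) univ := by
  induction P using MvPolynomial.induction_on with
  | C a => simpa using analyticOnNhd_const
  | add p q hp hq => simp only [map_add]; exact hp.add hq
  | mul_X p i hp => simp only [map_mul, eval_X]; exact hp.mul (hg i)

lemma eval_sub_const {n : ℕ} (c : ℝ) (P : MvPolynomial (Fin n) ℝ) (v : Fin n → ℝ) :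
    MvPolynomial.eval v (MvPolynomial.aeval (fun i => X i - C c) P)
      = MvPolynomial.eval (fun i => v i - c) P := by
  induction P using MvPolynomial.induction_on with
  | C a => simp only [MvPolynomial.aeval_C, MvPolynomial.algebraMap_eq, MvPolynomial.eval_C]
  | add p q hp hq => simp only [map_add, hp, hq]
  | mul_X p i hp =>
    simp only [map_mul, MvPolynomial.aeval_X, map_sub, MvPolynomial.aeval_C,
      MvPolynomial.algebraMap_eq, MvPolynomial.eval_mul, MvPolynomial.eval_sub,
      MvPolynomial.eval_X, MvPolynomial.eval_C, hp]

lemma aeval_add_sub {n : ℕ} (c : ℝ) (P : MvPolynomial (Fin n) ℝ) :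
    MvPolynomial.aeval (fun i => X i + C c)
      (MvPolynomial.aeval (fun i => X i - C c) P) = P := by
  induction P using MvPolynomial.induction_on with
  | C a => simp only [MvPolynomial.aeval_C, MvPolynomial.algebraMap_eq]
  | add p q hp hq => simp only [map_add, hp, hq]
  | mul_X p i hp =>
    simp only [map_mul, MvPolynomial.aeval_X, map_sub, map_add, MvPolynomial.aeval_C,
      MvPolynomial.algebraMap_eq, hp, add_sub_cancel_right]

/-- the key linear-independence / nonvanishing result for
double-exponential monomials -/
lemma key_nonvanish {n : ℕ} (Q : MvPolynomial (Fin n) ℝ) (hQ : Q ≠ 0)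
    (β : Fin n → ℝ) (hβinj : Function.Injective β) (hβpos : ∀ i, 0 < β i) :
    ¬ ∀ t : ℝ, MvPolynomial.eval (fun i => Real.exp (Real.exp (β i * t))) Q = 0 := by
  classical
  intro H
  set L : (Fin n →₀ ℕ) → ℝ → ℝ := fun d t => ∑ i, (d i : ℝ) * Real.exp (β i * t) with hL
  have hmonom : ∀ (d : Fin n →₀ ℕ) (t : ℝ),
      Real.exp (L d t) = ∏ i, (Real.exp (Real.exp (β i * t))) ^ (d i) := by
    intro d t
    rw [hL, Real.exp_sum]
    exact Finset.prod_congr rfl fun i _ => Real.exp_nat_mul _ _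
  have hFt : ∀ t : ℝ,
      (∑ d ∈ Q.support, MvPolynomial.coeff d Q * Real.exp (L d t)) = 0 := by
    intro t
    calc (∑ d ∈ Q.support, MvPolynomial.coeff d Q * Real.exp (L d t))
        = ∑ d ∈ Q.support, MvPolynomial.coeff d Q
            * ∏ i, (Real.exp (Real.exp (β i * t))) ^ (d i) :=
          Finset.sum_congr rfl fun d _ => by rw [hmonom]
      _ = MvPolynomial.eval (fun i => Real.exp (Real.exp (β i * t))) Q :=
          (MvPolynomial.eval_eq' _ _).symm
      _ = 0 := H t
  set R : (Fin n →₀ ℕ) → (Fin n →₀ ℕ) → Prop :=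
    fun d d' => Tendsto (fun t => L d t - L d' t) atTop atBot with hR
  have hexpj : ∀ j : Fin n, Tendsto (fun t => Real.exp (β j * t)) atTop atTop :=
    fun j => Real.tendsto_exp_atTop.comp (Tendsto.const_mul_atTop (hβpos j) tendsto_id)
  have htot : ∀ d d' : Fin n →₀ ℕ, d ≠ d' → R d d' ∨ R d' d := by
    intro d d' hne
    have hdiff : ∃ i, d i ≠ d' i := by
      by_contra hcon
      push_neg at hcon
      exact hne (Finsupp.ext hcon)
    obtain ⟨i0, hi0⟩ := hdiff
    set s : Finset (Fin n) := Finset.univ.filter (fun i => ((d i : ℝ) - (d' i : ℝ)) ≠ 0)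
      with hs
    have hi0s : i0 ∈ s := by
      rw [hs, Finset.mem_filter]
      refine ⟨Finset.mem_univ _, fun hc => hi0 ?_⟩
      have : (d i0 : ℝ) = (d' i0 : ℝ) := by linarith
      exact_mod_cast this
    obtain ⟨j, hjs, hjmax⟩ := Finset.exists_max_image s β ⟨i0, hi0s⟩
    have hγj : ((d j : ℝ) - (d' j : ℝ)) ≠ 0 := (Finset.mem_filter.1 hjs).2
    have hfact : ∀ t : ℝ, L d t - L d' t
        = Real.exp (β j * t) * ∑ i, ((d i : ℝ) - (d' i : ℝ)) * Real.exp ((β i - β j) * t) := by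
      intro t
      rw [hL, Finset.mul_sum, ← Finset.sum_sub_distrib]
      apply Finset.sum_congr rfl
      intro i _
      rw [show (β i * t) = (β j * t) + ((β i - β j) * t) by ring, Real.exp_add]
      ring
    have hinner : Tendsto
        (fun t => ∑ i, ((d i : ℝ) - (d' i : ℝ)) * Real.exp ((β i - β j) * t))
        atTop (𝓝 ((d j : ℝ) - (d' j : ℝ))) := by
      have hsum := tendsto_finset_sum (f := fun (i : Fin n) (t : ℝ) =>
          ((d i : ℝ) - (d' i : ℝ)) * Real.exp ((β i - β j) * t)) (x := atTop)
        (a := fun i => if i = j then ((d j : ℝ) - (d' j : ℝ)) else 0) Finset.univ ?_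
      · have : (∑ i, if i = j then ((d j : ℝ) - (d' j : ℝ)) else 0)
            = ((d j : ℝ) - (d' j : ℝ)) := by
          rw [Finset.sum_ite_eq' Finset.univ j]
          simp
        rwa [this] at hsum
      · intro i _
        by_cases hij : i = j
        · subst hij
          simp only [sub_self, zero_mul, Real.exp_zero, mul_one, if_pos]
          exact tendsto_const_nhds
        · simp only [if_neg hij]
          by_cases hγi : ((d i : ℝ) - (d' i : ℝ)) = 0
          · simp only [hγi, zero_mul]
            exact tendsto_const_nhds
          · have his : i ∈ s := by rw [hs, Finset.mem_filter]; exact ⟨Finset.mem_univ _, hγi⟩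
            have hlt : β i - β j < 0 :=
              sub_neg.2 (lt_of_le_of_ne (hjmax i his) (fun hc => hij (hβinj hc)))
            have hexp0 : Tendsto (fun t => Real.exp ((β i - β j) * t)) atTop (𝓝 0) := by
              apply Real.tendsto_exp_atBot.comp
              exact Tendsto.const_mul_atTop_of_neg hlt tendsto_id
            simpa using hexp0.const_mul ((d i : ℝ) - (d' i : ℝ))
    rcases lt_or_gt_of_ne hγj with hneg | hpos
    · left
      rw [hR]
      have := Tendsto.atTop_mul_neg hneg (hexpj j) hinner
      refine this.congr' (Eventually.of_forall fun t => ?_)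
      exact (hfact t).symm
    · right
      rw [hR]
      have hTop : Tendsto (fun t => L d t - L d' t) atTop atTop := by
        have := Tendsto.atTop_mul_pos hpos (hexpj j) hinner
        refine this.congr' (Eventually.of_forall fun t => ?_)
        exact (hfact t).symm
      have := (tendsto_neg_atTop_atBot (G := ℝ)).comp hTop
      refine this.congr' (Eventually.of_forall fun t => ?_)
      simp only [Function.comp_apply]
      ring
  have htrans : ∀ a b c, R a b → R b c → R a c := by
    intro a b c h1 h2
    rw [hR] at h1 h2 ⊢
    have := Tendsto.atBot_add_atBot h1 h2
    refine this.congr' (Eventually.of_forall fun t => ?_)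
    dsimp only
    ring
  obtain ⟨m, hmS, hmax⟩ := exists_rel_max R htrans htot Q.support
    (MvPolynomial.support_nonempty.2 hQ)
  have hzero : ∀ t : ℝ,
      (∑ d ∈ Q.support, MvPolynomial.coeff d Q * Real.exp (L d t - L m t)) = 0 := by
    intro t
    calc (∑ d ∈ Q.support, MvPolynomial.coeff d Q * Real.exp (L d t - L m t))
        = ∑ d ∈ Q.support, (MvPolynomial.coeff d Q * Real.exp (L d t))
            * Real.exp (-(L m t)) := by
          apply Finset.sum_congr rfl
          intro d _
          rw [sub_eq_add_neg, Real.exp_add]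
          ring
      _ = (∑ d ∈ Q.support, MvPolynomial.coeff d Q * Real.exp (L d t))
            * Real.exp (-(L m t)) := (Finset.sum_mul _ _ _).symm
      _ = 0 := by rw [hFt t, zero_mul]
  have hG : Tendsto
      (fun t => ∑ d ∈ Q.support, MvPolynomial.coeff d Q * Real.exp (L d t - L m t))
      atTop (𝓝 (MvPolynomial.coeff m Q)) := by
    have hsum := tendsto_finset_sum (f := fun (d : Fin n →₀ ℕ) (t : ℝ) =>
        MvPolynomial.coeff d Q * Real.exp (L d t - L m t)) (x := atTop)
      (a := fun d => if d = m then MvPolynomial.coeff m Q else 0) Q.support ?_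
    · have : (∑ d ∈ Q.support, if d = m then MvPolynomial.coeff m Q else 0)
          = MvPolynomial.coeff m Q := by
        rw [Finset.sum_ite_eq' Q.support m]
        simp [hmS]
      rwa [this] at hsum
    · intro d hd
      by_cases hdm : d = m
      · subst hdm
        simp only [sub_self, Real.exp_zero, mul_one, if_pos]
        exact tendsto_const_nhds
      · simp only [if_neg hdm]
        have hbot : Tendsto (fun t => L d t - L m t) atTop atBot := hmax d hd hdm
        have hexp0 : Tendsto (fun t => Real.exp (L d t - L m t)) atTop (𝓝 0) :=
          Real.tendsto_exp_atBot.comp hbot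
        simpa using hexp0.const_mul (MvPolynomial.coeff d Q)
  have hfinal : MvPolynomial.coeff m Q = 0 := by
    have h0 : Tendsto
        (fun t : ℝ => ∑ d ∈ Q.support, MvPolynomial.coeff d Q * Real.exp (L d t - L m t))
        atTop (𝓝 0) := by
      simp only [hzero]
      exact tendsto_const_nhds
    exact tendsto_nhds_unique hG h0
  exact (MvPolynomial.mem_support_iff.1 hmS) hfinal

end Poly

/-- The composite function for a given family of indices -/
def Ffun {n : ℕ} (α : Fin n → ℝ) (P : MvPolynomial (Fin n) ℝ) : ℝ → ℝ :=
  fun t => MvPolynomial.eval (fun i => Real.exp (Real.exp (Real.exp (α i) * t)) - Real.exp 1) P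

/-- the interval-splitting lemma: we can find a subinterval whose `ju`-image interval
avoids a given finite set -/
lemma ju_split (Z : Finset ℝ) : ∀ a b : ℝ, a < b →
    ∃ a₁ b₁ : ℝ, a < a₁ ∧ a₁ < b₁ ∧ b₁ < b ∧ ∀ z ∈ Z, z ∉ Icc (ju a₁) (ju b₁) := by
  classical
  induction Z using Finset.induction_on with
  | empty =>
    intro a b hab
    exact ⟨a + (b - a) / 3, b - (b - a) / 3, by linarith, by linarith, by linarith, by simp⟩
  | @insert z Z hzZ ih =>
    intro a b hab
    obtain ⟨a₁, b₁, h1, h2, h3, h4⟩ := ih a b hab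
    set x₁ := a₁ + (b₁ - a₁) / 8 with hx₁
    set x₂ := a₁ + (b₁ - a₁) / 4 with hx₂
    set x₃ := b₁ - (b₁ - a₁) / 4 with hx₃
    set x₄ := b₁ - (b₁ - a₁) / 8 with hx₄
    have hgt : a₁ < x₁ ∧ x₁ < x₂ ∧ x₂ < x₃ ∧ x₃ < x₄ ∧ x₄ < b₁ := by
      refine ⟨by rw [hx₁]; linarith, by rw [hx₁, hx₂]; linarith,
        by rw [hx₂, hx₃]; linarith, by rw [hx₃, hx₄]; linarith, by rw [hx₄]; linarith⟩
    by_cases hmem : z ∈ Icc (ju x₁) (ju x₂)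
    · refine ⟨x₃, x₄, by linarith [hgt.1, hgt.2.1, hgt.2.2.1], hgt.2.2.2.1,
        by linarith [hgt.2.2.2.2], ?_⟩
      intro z' hz'
      rcases Finset.mem_insert.1 hz' with rfl | hz'Z
      · intro hc
        have hlt : ju x₂ < ju x₃ := ju_lt hgt.2.2.1
        have := hmem.2
        have := hc.1
        linarith
      · intro hc
        exact h4 z' hz'Z ⟨le_trans (ju_mono (by linarith [hgt.1, hgt.2.1, hgt.2.2.1])) hc.1,
          le_trans hc.2 (ju_mono (by linarith [hgt.2.2.2.2]))⟩
    · refine ⟨x₁, x₂, by linarith [hgt.1], hgt.2.1, by linarith [hgt.2.2.1, hgt.2.2.2.1, hgt.2.2.2.2], ?_⟩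
      intro z' hz'
      rcases Finset.mem_insert.1 hz' with rfl | hz'Z
      · exact hmem
      · intro hc
        exact h4 z' hz'Z ⟨le_trans (ju_mono (by linarith [hgt.1])) hc.1,
          le_trans hc.2 (ju_mono (by linarith [hgt.2.2.1, hgt.2.2.2.1, hgt.2.2.2.2]))⟩

lemma master {n : ℕ} (P : MvPolynomial (Fin n) ℝ) (hP : P ≠ 0)
    (hP0 : MvPolynomial.coeff 0 P = 0) (α : Fin n → ℝ) (hα : Function.Injective α) :
    (∃ x ∈ Icc (0:ℝ) 1, Ffun α P (ju x) ≠ 0) ∧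
    (∀ x ∈ Ioc (0:ℝ) 1,
      Tendsto (fun y => Ffun α P (ju y)) (𝓝[<] x) (𝓝 (Ffun α P (ju x)))) ∧
    BoundedVariationOn (fun y => Ffun α P (ju y)) (Icc 0 1) ∧
    (∀ a b : ℝ, 0 ≤ a → a < b → b ≤ 1 →
      ∃ x ∈ Ioo a b, HasJumpAt (fun y => Ffun α P (ju y)) x) := by
  classical
  set β : Fin n → ℝ := fun i => Real.exp (α i) with hβ
  have hβpos : ∀ i, 0 < β i := fun i => Real.exp_pos _
  have hβinj : Function.Injective β := by
    intro i j hij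
    apply hα
    have := congrArg Real.log hij
    simpa [hβ, Real.log_exp] using this
  set F : ℝ → ℝ := Ffun α P with hFdef
  set Q : MvPolynomial (Fin n) ℝ :=
    MvPolynomial.aeval (fun i => MvPolynomial.X i - MvPolynomial.C (Real.exp 1)) P with hQdef
  have hQne : Q ≠ 0 := by
    intro hc
    apply hP
    have := aeval_add_sub (Real.exp 1) P
    rw [← hQdef] at this
    rw [hc] at this
    simpa using this.symm
  have hFQ : ∀ t : ℝ, F t = MvPolynomial.eval (fun i => Real.exp (Real.exp (β i * t))) Q := by
    intro t
    rw [hQdef, eval_sub_const]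
    rfl
  have hFnot : ¬ ∀ t : ℝ, F t = 0 := by
    intro Hc
    exact key_nonvanish Q hQne β hβinj hβpos (fun t => by rw [← hFQ t]; exact Hc t)
  have hFanalytic : AnalyticOnNhd ℝ F univ := by
    rw [hFdef]
    apply eval_analytic
    intro i
    have h1 : AnalyticOnNhd ℝ (fun t : ℝ => Real.exp (α i) * t) univ :=
      analyticOnNhd_const.mul (analyticOnNhd_id)
    exact (h1.rexp.rexp).sub analyticOnNhd_const
  have hFdiff : Differentiable ℝ F := fun t => (hFanalytic t (mem_univ t)).differentiableAt
  have hFcont : Continuous F := hFdiff.continuous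
  have hF'analytic : AnalyticOnNhd ℝ (deriv F) univ := hFanalytic.deriv
  have hF'diff : Differentiable ℝ (deriv F) :=
    fun t => (hF'analytic t (mem_univ t)).differentiableAt
  have hF'cont : Continuous (deriv F) := hF'diff.continuous
  have hF0 : F 0 = 0 := by
    rw [hFdef]
    show MvPolynomial.eval
      (fun i => Real.exp (Real.exp (Real.exp (α i) * 0)) - Real.exp 1) P = 0
    have hfz : (fun i : Fin n => Real.exp (Real.exp (Real.exp (α i) * 0)) - Real.exp 1)
        = (0 : Fin n → ℝ) := by
      funext i
      simp
    rw [hfz, MvPolynomial.eval_zero, MvPolynomial.constantCoeff_eq]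
    exact hP0
  have hFfreq : ∀ z₀ : ℝ, ¬ ∃ᶠ z in 𝓝[≠] z₀, F z = 0 := by
    intro z₀ hfreq
    exact hFnot fun t =>
      hFanalytic.eqOn_zero_of_preconnected_of_frequently_eq_zero
        isPreconnected_univ (mem_univ z₀) hfreq (mem_univ t)
  have hF'not : ¬ ∀ t : ℝ, deriv F t = 0 := by
    intro Hc
    apply hFnot
    intro t
    have := is_const_of_deriv_eq_zero hFdiff Hc t 0
    rw [this, hF0]
  have hF'freq : ∀ z₀ : ℝ, ¬ ∃ᶠ z in 𝓝[≠] z₀, deriv F z = 0 := by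
    intro z₀ hfreq
    exact hF'not fun t =>
      hF'analytic.eqOn_zero_of_preconnected_of_frequently_eq_zero
        isPreconnected_univ (mem_univ z₀) hfreq (mem_univ t)
  refine ⟨?_, ?_, ?_, ?_⟩
  -- nonvanishing on [0,1]
  · by_contra hcon
    push_neg at hcon
    set c : ℕ → ℝ := fun k => 1 - 1 / (k + 1) with hc
    have hck1 : ∀ k, c k < 1 := by
      intro k
      have h0 : (0:ℝ) < 1 / ((k:ℝ) + 1) := by positivity
      have hck : c k = 1 - 1 / ((k:ℝ) + 1) := rfl
      rw [hck]; linarith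
    have hck0 : ∀ k, 0 ≤ c k := by
      intro k
      have h1 : 1 / ((k:ℝ) + 1) ≤ 1 := by
        rw [div_le_one (by positivity)]
        have : (0:ℝ) ≤ k := Nat.cast_nonneg k
        linarith
      have hck : c k = 1 - 1 / ((k:ℝ) + 1) := rfl
      rw [hck]; linarith
    have hctend : Tendsto c atTop (𝓝 1) := by
      have h2 : Tendsto (fun k : ℕ => 1 - 1 / ((k:ℝ) + 1)) atTop (𝓝 (1 - 0)) :=
        tendsto_const_nhds.sub tendsto_one_div_add_atTop_nhds_zero_nat
      rw [sub_zero] at h2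
      exact h2
    have hjtend : Tendsto (fun k => ju (c k)) atTop (𝓝[≠] (ju 1)) := by
      apply tendsto_nhdsWithin_of_tendsto_nhds_of_eventually_within
      · exact (ju_left 1).comp
          (tendsto_nhdsWithin_of_tendsto_nhds_of_eventually_within _ hctend
            (Eventually.of_forall fun k => hck1 k))
      · exact Eventually.of_forall fun k => (ju_lt (hck1 k)).ne
    have hfreq : ∃ᶠ z in 𝓝[≠] (ju 1), F z = 0 :=
      hjtend.frequently (Frequently.of_forall fun k =>
        hcon (c k) ⟨hck0 k, (hck1 k).le⟩)
    exact hFfreq _ hfreq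
  -- left continuity
  · intro x _
    exact (hFcont.tendsto (ju x)).comp (ju_left x)
  -- bounded variation
  · have hK : IsCompact (Icc (ju 0) (ju 1)) := isCompact_Icc
    obtain ⟨C, hC⟩ := hK.exists_bound_of_continuousOn hF'cont.continuousOn
    have hlip : LipschitzOnWith (Real.toNNReal C) F (Icc (ju 0) (ju 1)) := by
      apply Convex.lipschitzOnWith_of_nnnorm_deriv_le
        (fun x _ => hFdiff x) _ (convex_Icc _ _)
      intro x hx
      rw [← NNReal.coe_le_coe, coe_nnnorm, Real.coe_toNNReal']
      exact le_trans (hC x hx) (le_max_left _ _)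
    have hmaps : MapsTo ju (Icc (0:ℝ) 1) (Icc (ju 0) (ju 1)) :=
      fun x hx => ⟨ju_mono hx.1, ju_mono hx.2⟩
    exact hlip.comp_boundedVariationOn hmaps ju_bv
  -- dense jumps
  · intro a b ha hab hb1
    set Zset : Set ℝ := {z : ℝ | z ∈ Icc (ju 0) (ju 1) ∧ deriv F z = 0} with hZset
    have hZfin : Zset.Finite := by
      by_contra hinf
      have hinf' : Zset.Infinite := hinf
      set e := hinf'.natEmbedding with he
      have hmem : ∀ k : ℕ, (e k : ℝ) ∈ Zset := fun k => (e k).2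
      obtain ⟨z, hzK, φ, hφ, hconv⟩ :=
        isCompact_Icc.tendsto_subseq (x := fun k => (e k : ℝ)) (fun k => (hmem k).1)
      have hinj : Function.Injective (fun k => (e (φ k) : ℝ)) := by
        intro k l hkl
        exact hφ.injective (e.injective (Subtype.val_injective hkl))
      have hev : ∀ᶠ k in atTop, (e (φ k) : ℝ) ≠ z := by
        by_cases hzx : ∃ k0, (e (φ k0) : ℝ) = z
        · obtain ⟨k0, hk0⟩ := hzx
          rw [eventually_atTop]
          refine ⟨k0 + 1, fun k hk hkz => ?_⟩
          have : k = k0 := hinj (hkz.trans hk0.symm)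
          omega
        · exact Eventually.of_forall fun k hkz => hzx ⟨k, hkz⟩
      have htendne : Tendsto (fun k => (e (φ k) : ℝ)) atTop (𝓝[≠] z) :=
        tendsto_nhdsWithin_of_tendsto_nhds_of_eventually_within _ hconv hev
      exact hF'freq z (htendne.frequently
        (Frequently.of_forall fun k => (hmem (φ k)).2))
    set Z := hZfin.toFinset with hZ
    obtain ⟨a₁, b₁, haa₁, ha₁b₁, hb₁b, havoid⟩ := ju_split Z a b hab
    obtain ⟨q, hq1, hq2⟩ := exists_rat_btwn ha₁b₁
    refine ⟨(q : ℝ), ⟨lt_trans haa₁ hq1, lt_trans hq2 hb₁b⟩, ?_⟩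
    set A := ju (q : ℝ) with hA
    set B := ju (q : ℝ) + jw q with hB
    have hAB : A < B := by rw [hA, hB]; linarith [jw_pos q]
    refine ⟨F A, F B, ?_, ?_, ?_⟩
    · exact (hFcont.tendsto A).comp (ju_left (q : ℝ))
    · exact (hFcont.tendsto B).comp (ju_right q)
    · intro hEq
      obtain ⟨cc, hcc, hcc0⟩ := exists_deriv_eq_zero hAB hFcont.continuousOn hEq
      have hccIcc : cc ∈ Icc (ju a₁) (ju b₁) := by
        constructor
        · exact le_trans (ju_mono hq1.le) hcc.1.le
        · exact le_trans hcc.2.le (ju_right_le q hq2)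
      have hccK : cc ∈ Icc (ju 0) (ju 1) := by
        constructor
        · exact le_trans (ju_mono (by linarith : (0:ℝ) ≤ a₁)) hccIcc.1
        · exact le_trans hccIcc.2 (ju_mono (by linarith : b₁ ≤ 1))
      have hccZ : cc ∈ Z := by
        rw [hZ, Set.Finite.mem_toFinset]
        exact ⟨hccK, hcc0⟩
      exact havoid cc hccZ hccIcc

end JumpConstruction

/-- The set of left-continuous functions of bounded variation on `[0,1]` with a dense set
of jump discontinuities is strongly `𝔠`-algebrable: there is a family of functions
indexed by `ℝ` (hence of cardinality continuum) which freely generates an algebra all of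
whose nonzero elements belong to that set. -/
theorem stmt14 :
    ∃ h : ℝ → ℝ → ℝ,
      ∀ (n : ℕ), 0 < n →
        ∀ P : MvPolynomial (Fin n) ℝ, P ≠ 0 → MvPolynomial.coeff 0 P = 0 →
          ∀ α : Fin n → ℝ, Function.Injective α →
            (∃ x ∈ Set.Icc (0 : ℝ) 1,
              MvPolynomial.eval (fun i => h (α i) x) P ≠ 0) ∧
            (∀ x ∈ Set.Ioc (0 : ℝ) 1,
              Filter.Tendsto (fun y => MvPolynomial.eval (fun i => h (α i) y) P)
                (𝓝[<] x) (𝓝 (MvPolynomial.eval (fun i => h (α i) x) P))) ∧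
            BoundedVariationOn (fun y => MvPolynomial.eval (fun i => h (α i) y) P)
              (Set.Icc 0 1) ∧
            (∀ a b : ℝ, 0 ≤ a → a < b → b ≤ 1 →
              ∃ x ∈ Set.Ioo a b,
                HasJumpAt (fun y => MvPolynomial.eval (fun i => h (α i) y) P) x) := by
  refine ⟨fun a x => Real.exp (Real.exp (Real.exp a * ju x)) - Real.exp 1,
    fun n _ P hP hP0 α hα => ?_⟩
  obtain ⟨m1, m2, m3, m4⟩ := master P hP hP0 α hα
  exact ⟨m1, m2, m3, m4⟩
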